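/- arXiv:0907.1257 — 6 statements merged into one kernel-verified Lean document; each statement's English description precedes it below -/
import Mathlib

section
/- The forward image of a Lagrangian subspace under a morphism of split-bilinear spaces is again Lagrangian. That is, if E ⊂ V⊕V* is Lagrangian and (Θ,ω): V⊕V* ⇢ V'⊕V'* is a morphism, then the forward image of E in V'⊕V'* is a Lagrangian subspace. -/
/-- The canonical split symmetric pairing on `V ⊕ V*`. -/
def diracPair {V : Type*} [AddCommGroup V] [Module ℝ V]
    (x y : V × Module.Dual ℝ V) : ℝ :=
  x.2 y.1 + y.2 x.1

/-- `E` is Lagrangian iff it coincides with its orthogonal w.r.t. the split pairing. -/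
def IsLagrangian {V : Type*} [AddCommGroup V] [Module ℝ V]
    (E : Submodule ℝ (V × Module.Dual ℝ V)) : Prop :=
  ∀ x, (∀ y ∈ E, diracPair x y = 0) ↔ x ∈ E

/-- The relation on `V ⊕ V*` × `V' ⊕ V'*` defined by a morphism `(Θ, ω)`:
`(v,α) ∼ (v',α')` iff `v' = Θ v` and `α = ι_v ω + Θ* α'`. -/
def DiracRel {V V' : Type*} [AddCommGroup V] [Module ℝ V] [AddCommGroup V'] [Module ℝ V']
    (Θ : V →ₗ[ℝ] V') (ω : V →ₗ[ℝ] Module.Dual ℝ V)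
    (x : V × Module.Dual ℝ V) (x' : V' × Module.Dual ℝ V') : Prop :=
  x'.1 = Θ x.1 ∧ x.2 = ω x.1 + x'.2.comp Θ

/-- The forward image of a subspace `E` under the morphism `(Θ, ω)`. -/
def fwdImage {V V' : Type*} [AddCommGroup V] [Module ℝ V] [AddCommGroup V'] [Module ℝ V']
    (Θ : V →ₗ[ℝ] V') (ω : V →ₗ[ℝ] Module.Dual ℝ V)
    (E : Submodule ℝ (V × Module.Dual ℝ V)) : Set (V' × Module.Dual ℝ V') :=
  {x' | ∃ x ∈ E, DiracRel Θ ω x x'}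

/-- `(Θ, ω)` is a Dirac morphism `(𝕍, E) ⇢ (𝕍', E')`: `E'` is the forward image of `E`. -/
def IsDiracMorphism {V V' : Type*} [AddCommGroup V] [Module ℝ V] [AddCommGroup V'] [Module ℝ V']
    (Θ : V →ₗ[ℝ] V') (ω : V →ₗ[ℝ] Module.Dual ℝ V)
    (E : Submodule ℝ (V × Module.Dual ℝ V)) (E' : Submodule ℝ (V' × Module.Dual ℝ V')) : Prop :=
  (E' : Set (V' × Module.Dual ℝ V')) = fwdImage Θ ω E

/-- Strong Dirac morphism: moreover `E ∩ ker(Θ,ω) = 0`. -/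
def IsStrongDiracMorphism {V V' : Type*} [AddCommGroup V] [Module ℝ V]
    [AddCommGroup V'] [Module ℝ V']
    (Θ : V →ₗ[ℝ] V') (ω : V →ₗ[ℝ] Module.Dual ℝ V)
    (E : Submodule ℝ (V × Module.Dual ℝ V)) (E' : Submodule ℝ (V' × Module.Dual ℝ V')) : Prop :=
  IsDiracMorphism Θ ω E E' ∧ ∀ x ∈ E, DiracRel Θ ω x 0 → x = 0

/-!
The forward image is `π (φ⁻¹ E)` for the linear maps `φ (v, α') = (v, ι_v ω + Θ* α')` and
`π (v, α') = (Θ v, α')`. Since `ω` is skew, `⟨π z, π z'⟩ = ⟨φ z, φ z'⟩`, so isotropy of `E`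
passes to the forward image. Conversely, if `x'` is orthogonal to `π (φ⁻¹ E)`, then
`⟨x', π ·⟩` annihilates `φ⁻¹ E`, hence factors as `M ∘ φ` with `M` annihilating `E`. As `V` is
finite-dimensional the split pairing is nondegenerate, so `M = ⟨x, ·⟩` with `x ∈ E^⊥ = E`, and
comparing `⟨x', π ·⟩ = ⟨x, φ ·⟩` componentwise shows `x ∼ x'`.
-/

theorem Submodule.dualAnnihilator_comap_eq_map_dualMap {K W U : Type*} [Field K]
    [AddCommGroup W] [Module K W] [AddCommGroup U] [Module K U]
    (f : W →ₗ[K] U) (E : Submodule K U) :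
    (E.comap f).dualAnnihilator = E.dualAnnihilator.map f.dualMap := by
  refine le_antisymm ?_ (dualAnnihilator_map_dualMap_le E f)
  rw [← ker_mkQ E, ← LinearMap.ker_comp, ← LinearMap.range_dualMap_eq_dualAnnihilator_ker,
    ← LinearMap.dualMap_comp_dualMap, LinearMap.range_comp,
    LinearMap.range_dualMap_eq_dualAnnihilator_ker]

section

variable {V V' : Type*} [AddCommGroup V] [Module ℝ V] [AddCommGroup V'] [Module ℝ V']

def diracPairing (x : V × Module.Dual ℝ V) : Module.Dual ℝ (V × Module.Dual ℝ V) :=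
  x.2.coprod (Module.Dual.eval ℝ V x.1)

@[simp]
theorem diracPairing_apply (x y : V × Module.Dual ℝ V) : diracPairing x y = diracPair x y :=
  rfl

theorem exists_diracPairing_eq [FiniteDimensional ℝ V] (M : Module.Dual ℝ (V × Module.Dual ℝ V)) :
    ∃ x, diracPairing x = M := by
  refine ⟨((Module.evalEquiv ℝ V).symm (M ∘ₗ LinearMap.inr ℝ _ _), M ∘ₗ LinearMap.inl ℝ _ _), ?_⟩
  conv_rhs => rw [← LinearMap.coprod_comp_inl_inr M]
  unfold diracPairing
  congr 1
  exact (Module.evalEquiv ℝ V).apply_symm_apply _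

theorem IsLagrangian.mem_of_diracPairing_mem {E : Submodule ℝ (V × Module.Dual ℝ V)}
    (hE : IsLagrangian E) {x : V × Module.Dual ℝ V} (hx : diracPairing x ∈ E.dualAnnihilator) :
    x ∈ E :=
  (hE x).mp fun y hy => (Submodule.mem_dualAnnihilator _).mp hx y hy

variable (Θ : V →ₗ[ℝ] V') (ω : V →ₗ[ℝ] Module.Dual ℝ V)

def diracSource : V × Module.Dual ℝ V' →ₗ[ℝ] V × Module.Dual ℝ V :=
  (LinearMap.fst ℝ _ _).prod (ω ∘ₗ LinearMap.fst ℝ _ _ + Θ.dualMap ∘ₗ LinearMap.snd ℝ _ _)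

def diracTarget : V × Module.Dual ℝ V' →ₗ[ℝ] V' × Module.Dual ℝ V' :=
  Θ.prodMap LinearMap.id

@[simp]
theorem diracSource_apply (z : V × Module.Dual ℝ V') :
    diracSource Θ ω z = (z.1, ω z.1 + z.2 ∘ₗ Θ) :=
  rfl

@[simp]
theorem diracTarget_apply (z : V × Module.Dual ℝ V') : diracTarget Θ z = (Θ z.1, z.2) :=
  rfl

theorem diracRel_iff_exists (x : V × Module.Dual ℝ V) (x' : V' × Module.Dual ℝ V') :
    DiracRel Θ ω x x' ↔ ∃ z, diracSource Θ ω z = x ∧ diracTarget Θ z = x' := by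
  constructor
  · rintro ⟨h₁, h₂⟩
    exact ⟨(x.1, x'.2), Prod.ext rfl h₂.symm, Prod.ext h₁.symm rfl⟩
  · rintro ⟨z, rfl, rfl⟩
    exact ⟨rfl, rfl⟩

def fwdImageSubmodule (E : Submodule ℝ (V × Module.Dual ℝ V)) :
    Submodule ℝ (V' × Module.Dual ℝ V') :=
  (E.comap (diracSource Θ ω)).map (diracTarget Θ)

theorem coe_fwdImageSubmodule (E : Submodule ℝ (V × Module.Dual ℝ V)) :
    (fwdImageSubmodule Θ ω E : Set (V' × Module.Dual ℝ V')) = fwdImage Θ ω E := by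
  ext x'
  simp only [fwdImageSubmodule, Submodule.map_coe, Submodule.comap_coe, Set.mem_image,
    Set.mem_preimage, SetLike.mem_coe, fwdImage, Set.mem_ofPred_eq, diracRel_iff_exists]
  constructor
  · rintro ⟨z, hz, rfl⟩
    exact ⟨_, hz, z, rfl, rfl⟩
  · rintro ⟨_, hx, z, rfl, rfl⟩
    exact ⟨z, hx, rfl⟩

variable {ω}

theorem diracPair_diracTarget (hω : ω.IsAlt) (z z' : V × Module.Dual ℝ V') :
    diracPair (diracTarget Θ z) (diracTarget Θ z') =
      diracPair (diracSource Θ ω z) (diracSource Θ ω z') := by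
  have hskew := hω.neg z.1 z'.1
  simp only [diracPair, diracTarget_apply, diracSource_apply, LinearMap.add_apply,
    LinearMap.comp_apply]
  linarith

theorem diracRel_of_diracPairing_comp_eq (hω : ω.IsAlt) {x : V × Module.Dual ℝ V}
    {x' : V' × Module.Dual ℝ V'}
    (h : diracPairing x' ∘ₗ diracTarget Θ = diracPairing x ∘ₗ diracSource Θ ω) :
    DiracRel Θ ω x x' := by
  have hpair (z) := LinearMap.congr_fun h z
  simp only [LinearMap.comp_apply, diracPairing_apply, diracPair, diracTarget_apply,
    diracSource_apply, LinearMap.add_apply] at hpair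
  constructor
  · refine (sub_eq_zero.mp ((Module.forall_dual_apply_eq_zero_iff ℝ _).mp fun α' => ?_)).symm
    have := hpair (0, α')
    simp only [map_zero, LinearMap.zero_apply, zero_add] at this
    rw [map_sub]
    linarith
  · ext v
    have := hpair (v, 0)
    have hskew := hω.neg v x.1
    simp only [LinearMap.zero_apply, add_zero] at this ⊢
    simp only [LinearMap.add_apply, LinearMap.comp_apply]
    linarith

variable {Θ}

theorem isLagrangian_fwdImageSubmodule [FiniteDimensional ℝ V] (hω : ω.IsAlt)
    {E : Submodule ℝ (V × Module.Dual ℝ V)} (hE : IsLagrangian E) :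
    IsLagrangian (fwdImageSubmodule Θ ω E) := by
  intro x'
  constructor
  · intro hx'
    have hann : diracPairing x' ∘ₗ diracTarget Θ ∈ (E.comap (diracSource Θ ω)).dualAnnihilator :=
      (Submodule.mem_dualAnnihilator _).mpr fun z hz =>
        hx' _ (Submodule.mem_map_of_mem hz)
    rw [Submodule.dualAnnihilator_comap_eq_map_dualMap] at hann
    obtain ⟨M, hM, hMx'⟩ := hann
    obtain ⟨x, rfl⟩ := exists_diracPairing_eq M
    have hrel := diracRel_of_diracPairing_comp_eq Θ hω hMx'.symm
    obtain ⟨z, rfl, rfl⟩ := (diracRel_iff_exists Θ ω x x').mp hrel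
    exact Submodule.mem_map_of_mem (hE.mem_of_diracPairing_mem hM)
  · rintro ⟨z, hz, rfl⟩ _ ⟨z', hz', rfl⟩
    rw [diracPair_diracTarget Θ hω]
    exact (hE _).mpr hz _ hz'

end

theorem forward_image_isLagrangian_general
    {V V' : Type*} [AddCommGroup V] [Module ℝ V] [FiniteDimensional ℝ V]
    [AddCommGroup V'] [Module ℝ V']
    (Θ : V →ₗ[ℝ] V') (ω : V →ₗ[ℝ] Module.Dual ℝ V) (hω : ∀ v, ω v v = 0)
    (E : Submodule ℝ (V × Module.Dual ℝ V)) (hE : IsLagrangian E) :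
    ∃ E' : Submodule ℝ (V' × Module.Dual ℝ V'),
      (E' : Set (V' × Module.Dual ℝ V')) = fwdImage Θ ω E ∧ IsLagrangian E' :=
  ⟨fwdImageSubmodule Θ ω E, coe_fwdImageSubmodule Θ ω E, isLagrangian_fwdImageSubmodule hω hE⟩

/-- The forward image of a Lagrangian subspace under a morphism of
split-bilinear spaces is again a Lagrangian subspace. -/
theorem forward_image_isLagrangian
    {V V' : Type*} [AddCommGroup V] [Module ℝ V] [FiniteDimensional ℝ V]
    [AddCommGroup V'] [Module ℝ V'] [FiniteDimensional ℝ V']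
    (Θ : V →ₗ[ℝ] V') (ω : V →ₗ[ℝ] Module.Dual ℝ V) (hω : ∀ v, ω v v = 0)
    (E : Submodule ℝ (V × Module.Dual ℝ V)) (hE : IsLagrangian E) :
    ∃ E' : Submodule ℝ (V' × Module.Dual ℝ V'),
      (E' : Set (V' × Module.Dual ℝ V')) = fwdImage Θ ω E ∧ IsLagrangian E' :=
  forward_image_isLagrangian_general Θ ω hω E hE
end

section
/- For a Euclidean vector space V, the map A ↦ E_A = {((I−A⁻¹)v, (I+A⁻¹)v/2) : v ∈ V} is a bijection from the orthogonal group O(V) onto the set of Lagrangian subspaces of V⊕V* (identifying V* with V via the inner product). -/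
open RealInnerProductSpace

/-- The split symmetric pairing on `V ⊕ V* ≅ V ⊕ V`, where `V*` is identified
with `V` via the inner product. -/
def diracPairE {V : Type*} [NormedAddCommGroup V] [InnerProductSpace ℝ V]
    (x y : V × V) : ℝ :=
  ⟪x.2, y.1⟫ + ⟪y.2, x.1⟫

/-- A subspace of `V ⊕ V* ≅ V ⊕ V` is Lagrangian iff it coincides with its
orthogonal relative to the split pairing. -/
def IsLagrangianE {V : Type*} [NormedAddCommGroup V] [InnerProductSpace ℝ V]
    (E : Submodule ℝ (V × V)) : Prop :=
  ∀ x, (∀ y ∈ E, diracPairE x y = 0) ↔ x ∈ E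

/-- The Lagrangian subspace `E_A = {((I - A⁻¹)v, (I + A⁻¹)v/2) : v ∈ V}`
associated to an orthogonal transformation `A ∈ O(V)`. -/
noncomputable def lagrangianOf {V : Type*} [NormedAddCommGroup V] [InnerProductSpace ℝ V]
    (A : V ≃ₗᵢ[ℝ] V) : Submodule ℝ (V × V) :=
  LinearMap.range (LinearMap.prod
    (LinearMap.id - A.symm.toLinearEquiv.toLinearMap)
    ((2⁻¹ : ℝ) • (LinearMap.id + A.symm.toLinearEquiv.toLinearMap)))
/-!
In the coordinates `diagCoords x = (ε x, φ x) = (x₂ + x₁/2, x₂ - x₁/2)` the split pairing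
becomes `⟪ε x, ε y⟫ - ⟪φ x, φ y⟫`, and `E_A` is the graph `φ = A⁻¹ ε`. On a Lagrangian `E` the form
vanishes, so `‖ε x‖ = ‖φ x‖`; hence `ε` is injective on `E`, and it is onto because a vector
orthogonal to `ε(E)` gives an element of `E` with `φ = 0`. Thus `E` is the graph of the linear
isometry `φ ∘ ε⁻¹`, and a Lagrangian contained in another one equals it.
-/

section

variable {V : Type*} [NormedAddCommGroup V] [InnerProductSpace ℝ V]

noncomputable def diagCoords : (V × V) ≃ₗ[ℝ] V × V where
  toFun x := (x.2 + (2⁻¹ : ℝ) • x.1, x.2 - (2⁻¹ : ℝ) • x.1)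
  invFun p := (p.1 - p.2, (2⁻¹ : ℝ) • (p.1 + p.2))
  map_add' x y := by ext <;> simp only [Prod.fst_add, Prod.snd_add] <;> module
  map_smul' c x := by ext <;> simp only [Prod.smul_fst, Prod.smul_snd, RingHom.id_apply] <;> module
  left_inv x := by ext <;> dsimp only <;> module
  right_inv p := by ext <;> dsimp only <;> module

@[simp]
lemma diagCoords_apply (x : V × V) :
    diagCoords x = (x.2 + (2⁻¹ : ℝ) • x.1, x.2 - (2⁻¹ : ℝ) • x.1) := rfl

lemma diracPairE_eq_inner_sub_inner (x y : V × V) :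
    diracPairE x y =
      ⟪(diagCoords x).1, (diagCoords y).1⟫ - ⟪(diagCoords x).2, (diagCoords y).2⟫ := by
  simp only [diracPairE, diagCoords_apply, inner_add_left, inner_add_right, inner_sub_left,
    inner_sub_right, real_inner_smul_left, real_inner_smul_right, real_inner_comm x.1 y.2]
  ring

lemma mem_lagrangianOf_iff (A : V ≃ₗᵢ[ℝ] V) (x : V × V) :
    x ∈ lagrangianOf A ↔ (diagCoords x).2 = A.symm (diagCoords x).1 := by
  change (∃ v, diagCoords.symm (v, A.symm v) = x) ↔ _
  constructor
  · rintro ⟨v, rfl⟩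
    simp only [LinearEquiv.apply_symm_apply]
  · intro h
    exact ⟨(diagCoords x).1, by rw [← h, LinearEquiv.symm_apply_eq]⟩

lemma diagCoords_symm_mem_lagrangianOf (A : V ≃ₗᵢ[ℝ] V) (v : V) :
    diagCoords.symm (v, A.symm v) ∈ lagrangianOf A := by
  rw [mem_lagrangianOf_iff, LinearEquiv.apply_symm_apply]

lemma isLagrangianE_lagrangianOf (A : V ≃ₗᵢ[ℝ] V) : IsLagrangianE (lagrangianOf A) := by
  intro x
  simp only [diracPairE_eq_inner_sub_inner]
  constructor
  · intro h
    rw [mem_lagrangianOf_iff, eq_comm, LinearIsometryEquiv.symm_apply_eq]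
    refine ext_inner_right ℝ fun u => ?_
    have hu := h _ (diagCoords_symm_mem_lagrangianOf A u)
    rw [LinearEquiv.apply_symm_apply, ← A.inner_map_eq_flip] at hu
    linarith
  · intro hx y hy
    rw [mem_lagrangianOf_iff] at hx hy
    rw [hx, hy, LinearIsometryEquiv.inner_map_map, sub_self]

lemma lagrangianOf_injective : Function.Injective (lagrangianOf : (V ≃ₗᵢ[ℝ] V) → _) := by
  intro A B hAB
  suffices A.symm = B.symm by simpa using congrArg LinearIsometryEquiv.symm this
  ext v
  have h := diagCoords_symm_mem_lagrangianOf A v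
  rw [hAB, mem_lagrangianOf_iff, LinearEquiv.apply_symm_apply] at h
  exact h

namespace IsLagrangianE

variable {E F : Submodule ℝ (V × V)}

lemma diracPairE_eq_zero (hE : IsLagrangianE E) {x y : V × V} (hx : x ∈ E) (hy : y ∈ E) :
    diracPairE x y = 0 :=
  (hE x).2 hx y hy

lemma inner_diagCoords_fst_eq_inner_snd (hE : IsLagrangianE E) {x y : V × V} (hx : x ∈ E)
    (hy : y ∈ E) :
    ⟪(diagCoords x).1, (diagCoords y).1⟫ = ⟪(diagCoords x).2, (diagCoords y).2⟫ := by
  have h := hE.diracPairE_eq_zero hx hy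
  rw [diracPairE_eq_inner_sub_inner] at h
  linarith

lemma eq_of_le (hE : IsLagrangianE E) (hF : IsLagrangianE F) (h : E ≤ F) : E = F :=
  le_antisymm h fun x hx => (hE x).1 fun _ hy => hF.diracPairE_eq_zero hx (h hy)

lemma diagCoords_fst_injective (hE : IsLagrangianE E) :
    Function.Injective (LinearMap.fst ℝ V V ∘ₗ diagCoords.toLinearMap ∘ₗ E.subtype) := by
  rw [← LinearMap.ker_eq_bot, Submodule.eq_bot_iff]
  rintro ⟨x, hx⟩ (hfst : (diagCoords x).1 = 0)
  have hsnd : (diagCoords x).2 = 0 := by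
    have h := hE.inner_diagCoords_fst_eq_inner_snd hx hx
    rwa [hfst, inner_zero_left, eq_comm, inner_self_eq_zero] at h
  exact Subtype.ext (diagCoords.map_eq_zero_iff.1 (Prod.ext hfst hsnd))

variable [FiniteDimensional ℝ V]

lemma diagCoords_fst_surjective (hE : IsLagrangianE E) :
    Function.Surjective (LinearMap.fst ℝ V V ∘ₗ diagCoords.toLinearMap ∘ₗ E.subtype) := by
  rw [← LinearMap.range_eq_top, ← Submodule.orthogonal_eq_bot_iff, Submodule.eq_bot_iff]
  intro w hw
  have hmem : diagCoords.symm (w, 0) ∈ E := (hE _).1 fun y hy => by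
    rw [diracPairE_eq_inner_sub_inner, LinearEquiv.apply_symm_apply, inner_zero_left, sub_zero,
      real_inner_comm]
    exact hw _ ⟨⟨y, hy⟩, rfl⟩
  have h := hE.inner_diagCoords_fst_eq_inner_snd hmem hmem
  rwa [LinearEquiv.apply_symm_apply, inner_zero_left, inner_self_eq_zero] at h

noncomputable def diagCoordsFstEquiv (hE : IsLagrangianE E) : E ≃ₗ[ℝ] V :=
  LinearEquiv.ofBijective _ ⟨hE.diagCoords_fst_injective, hE.diagCoords_fst_surjective⟩

noncomputable def linearIsometry (hE : IsLagrangianE E) : V →ₗᵢ[ℝ] V :=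
  LinearMap.isometryOfInner
    (LinearMap.snd ℝ V V ∘ₗ diagCoords.toLinearMap ∘ₗ E.subtype ∘ₗ
      hE.diagCoordsFstEquiv.symm.toLinearMap)
    fun v w => by
      obtain ⟨x, rfl⟩ := hE.diagCoordsFstEquiv.surjective v
      obtain ⟨y, rfl⟩ := hE.diagCoordsFstEquiv.surjective w
      simp only [LinearMap.comp_apply, LinearEquiv.coe_coe, LinearEquiv.symm_apply_apply]
      exact (hE.inner_diagCoords_fst_eq_inner_snd x.2 y.2).symm

lemma linearIsometry_diagCoords_fst (hE : IsLagrangianE E) {x : V × V} (hx : x ∈ E) :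
    hE.linearIsometry (diagCoords x).1 = (diagCoords x).2 := by
  change (diagCoords (hE.diagCoordsFstEquiv.symm (hE.diagCoordsFstEquiv ⟨x, hx⟩) : V × V)).2 = _
  rw [LinearEquiv.symm_apply_apply]

noncomputable def linearIsometryEquiv (hE : IsLagrangianE E) : V ≃ₗᵢ[ℝ] V :=
  hE.linearIsometry.toLinearIsometryEquiv rfl

lemma le_lagrangianOf (hE : IsLagrangianE E) : E ≤ lagrangianOf hE.linearIsometryEquiv.symm := by
  intro x hx
  rw [mem_lagrangianOf_iff, LinearIsometryEquiv.symm_symm]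
  exact (hE.linearIsometry_diagCoords_fst hx).symm

end IsLagrangianE

end

/-- `A ↦ E_A` is a bijection from `O(V)` onto the set of Lagrangian
subspaces of `V ⊕ V*`. -/
theorem orthogonal_group_bijection_lagrangian_grassmannian
    {V : Type*} [NormedAddCommGroup V] [InnerProductSpace ℝ V] [FiniteDimensional ℝ V] :
    (∀ A : V ≃ₗᵢ[ℝ] V, IsLagrangianE (lagrangianOf A)) ∧
    Function.Injective (fun A : V ≃ₗᵢ[ℝ] V => lagrangianOf A) ∧
    (∀ E : Submodule ℝ (V × V), IsLagrangianE E → ∃ A : V ≃ₗᵢ[ℝ] V, lagrangianOf A = E) :=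
  ⟨isLagrangianE_lagrangianOf, lagrangianOf_injective, fun _E hE =>
    ⟨_, (hE.eq_of_le (isLagrangianE_lagrangianOf _) hE.le_lagrangianOf).symm⟩⟩
end

section
/- For A₁, A₂ ∈ O(V), the intersection of the Lagrangian subspaces E_{A₁} ∩ E_{A₂} is isomorphic to ker(A₁ − A₂); in particular E_{A₁} and E_{A₂} are transverse if and only if A₁ − A₂ is invertible. -/
open RealInnerProductSpace

/-!
Substituting `v = A w` parametrises `E_A` injectively as `{(A w - w, (A w + w)/2)}`. In this
form the two components determine `w` and `A w`, so a common point of `E_{A₁}` and `E_{A₂}`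
comes from a single `w` with `A₁ w = A₂ w`. Transversality is then injectivity of `A₁ - A₂`,
which in finite dimension is bijectivity.
-/

namespace LinearMap

variable {K V : Type*} [Field K] [AddCommGroup V] [Module K V]

def lagrangianParam (f : V →ₗ[K] V) : V →ₗ[K] V × V :=
  (f - id).prod ((2⁻¹ : K) • (f + id))

theorem lagrangianParam_apply (f : V →ₗ[K] V) (w : V) :
    f.lagrangianParam w = (f w - w, (2⁻¹ : K) • (f w + w)) := rfl

theorem eq_and_eq_of_lagrangianParam_eq [NeZero (2 : K)] {f g : V →ₗ[K] V} {v w : V}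
    (h : f.lagrangianParam v = g.lagrangianParam w) : v = w ∧ f v = g w := by
  obtain ⟨hdiff, hsum⟩ := Prod.ext_iff.mp h
  simp only [lagrangianParam_apply] at hdiff hsum
  have hsum' : f v + v = g w + w := smul_right_injective V (inv_ne_zero two_ne_zero) hsum
  have hv : (2 : K) • v = (2 : K) • w := by
    rw [two_smul, two_smul]
    calc v + v = (f v + v) - (f v - v) := by abel
      _ = (g w + w) - (g w - w) := by rw [hsum', hdiff]
      _ = w + w := by abel
  obtain rfl := smul_right_injective V two_ne_zero hv
  exact ⟨rfl, sub_left_injective hdiff⟩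

theorem lagrangianParam_injective [NeZero (2 : K)] (f : V →ₗ[K] V) :
    Function.Injective f.lagrangianParam :=
  fun _ _ h ↦ (eq_and_eq_of_lagrangianParam_eq h).1

theorem range_lagrangianParam_inf [NeZero (2 : K)] (f g : V →ₗ[K] V) :
    range f.lagrangianParam ⊓ range g.lagrangianParam =
      (ker (f - g)).map f.lagrangianParam := by
  ext x
  simp only [Submodule.mem_inf, mem_range, Submodule.mem_map, mem_ker,
    sub_apply, sub_eq_zero]
  constructor
  · rintro ⟨⟨v, rfl⟩, ⟨w, hw⟩⟩
    obtain ⟨rfl, hfg⟩ := eq_and_eq_of_lagrangianParam_eq hw.symm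
    exact ⟨v, hfg, rfl⟩
  · rintro ⟨v, hfg, rfl⟩
    exact ⟨⟨v, rfl⟩, ⟨v, by simp only [lagrangianParam_apply, hfg]⟩⟩

end LinearMap

theorem lagrangianOf_eq_range_lagrangianParam {V : Type*} [NormedAddCommGroup V]
    [InnerProductSpace ℝ V] (A : V ≃ₗᵢ[ℝ] V) :
    lagrangianOf A = LinearMap.range A.toLinearEquiv.toLinearMap.lagrangianParam := by
  refine (LinearMap.range_comp_of_range_eq_top _ A.toLinearEquiv.range).symm.trans
    (congrArg LinearMap.range ?_)
  ext w <;> simp [LinearMap.lagrangianParam_apply, add_comm]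

/-- `E_{A₁} ∩ E_{A₂} ≅ ker(A₁ - A₂)`; in particular the Lagrangians
`E_{A₁}` and `E_{A₂}` are transverse iff `A₁ - A₂` is invertible. -/
theorem lagrangian_intersection_iso_ker
    {V : Type*} [NormedAddCommGroup V] [InnerProductSpace ℝ V] [FiniteDimensional ℝ V]
    (A₁ A₂ : V ≃ₗᵢ[ℝ] V) :
    Nonempty (↥(lagrangianOf A₁ ⊓ lagrangianOf A₂) ≃ₗ[ℝ]
        ↥(LinearMap.ker (A₁.toLinearEquiv.toLinearMap - A₂.toLinearEquiv.toLinearMap))) ∧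
    ((lagrangianOf A₁ ⊓ lagrangianOf A₂ = ⊥) ↔
        Function.Bijective (A₁.toLinearEquiv.toLinearMap - A₂.toLinearEquiv.toLinearMap)) := by
  set f₁ := A₁.toLinearEquiv.toLinearMap
  set f₂ := A₂.toLinearEquiv.toLinearMap
  have hinter : lagrangianOf A₁ ⊓ lagrangianOf A₂ =
      (LinearMap.ker (f₁ - f₂)).map f₁.lagrangianParam := by
    rw [lagrangianOf_eq_range_lagrangianParam, lagrangianOf_eq_range_lagrangianParam,
      LinearMap.range_lagrangianParam_inf]
  let e := (LinearEquiv.ofEq _ _ hinter).trans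
    (Submodule.equivMapOfInjective _ f₁.lagrangianParam_injective _).symm
  refine ⟨⟨e⟩, ?_⟩
  rw [← Submodule.subsingleton_iff_eq_bot, e.toEquiv.subsingleton_congr,
    Submodule.subsingleton_iff_eq_bot, LinearMap.ker_eq_bot]
  exact ⟨fun h ↦ ⟨h, LinearMap.injective_iff_surjective.mp h⟩, And.left⟩
end

section
/- For A ∈ O(V), the dimension of E_A ∩ V equals the dimension of ker(A + I); consequently dim(E_A ∩ V) is even if and only if det(A) = 1. -/
open RealInnerProductSpace

/-! `E_A ∩ (V ⊕ 0)` consists of the pairs `(2v, 0)` with `A⁻¹ v = -v`, so it is a copy of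
`K = ker (A + 1)`. For the determinant, split `V = K ⊕ Kᗮ`: `Kᗮ` is `A`-invariant because
`range (A + 1) ⊥ K`, so `A` acts by `-1` on `V ⧸ Kᗮ ≅ K`, while on `Kᗮ` it is orthogonal
without eigenvalue `-1`. There `Aᵀ (A + 1) = (A + 1)ᵀ` with `det (A + 1) ≠ 0` forces
`det A = 1`. -/

namespace LinearMap

theorem det_adjoint {𝕜 E : Type*} [RCLike 𝕜] [NormedAddCommGroup E] [InnerProductSpace 𝕜 E]
    [FiniteDimensional 𝕜 E] (T : E →ₗ[𝕜] E) :
    LinearMap.det (adjoint T) = star (LinearMap.det T) := by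
  let v := stdOrthonormalBasis 𝕜 E
  rw [← det_toMatrix v.toBasis, ← det_toMatrix v.toBasis T, toMatrix_adjoint v v,
    Matrix.det_conjTranspose]

theorem mem_ker_add_id_iff {R M : Type*} [Ring R] [AddCommGroup M] [Module R M]
    (T : M →ₗ[R] M) (x : M) : x ∈ ker (T + id) ↔ T x = -x := by
  simp [add_eq_zero_iff_eq_neg]

end LinearMap

theorem Submodule.finrank_prod_bot {R M M₂ : Type*} [Ring R] [AddCommGroup M] [Module R M]
    [AddCommGroup M₂] [Module R M₂] (p : Submodule R M) :
    Module.finrank R (p.prod (⊥ : Submodule R M₂)) = Module.finrank R p := by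
  rw [← map_inl]
  exact (p.equivMapOfInjective _ LinearMap.inl_injective).symm.finrank_eq

namespace LinearIsometry

open LinearMap Module

def restrict {R E : Type*} [Ring R] [SeminormedAddCommGroup E] [Module R E] (f : E →ₗᵢ[R] E)
    {p : Submodule R E} (hp : p ≤ p.comap f.toLinearMap) : p →ₗᵢ[R] p where
  toLinearMap := f.toLinearMap.restrict hp
  norm_map' x := f.norm_map x

variable {𝕜 E : Type*} [RCLike 𝕜] [NormedAddCommGroup E] [InnerProductSpace 𝕜 E]

theorem range_add_id_le_orthogonal_ker (f : E →ₗᵢ[𝕜] E) :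
    range (f.toLinearMap + LinearMap.id) ≤ (ker (f.toLinearMap + LinearMap.id))ᗮ := by
  rintro _ ⟨x, rfl⟩ k hk
  replace hk : f k = -k := (mem_ker_add_id_iff _ k).1 hk
  have : inner 𝕜 k (f x) = -inner 𝕜 k x := by
    rw [← f.inner_map_map k x, hk, inner_neg_left, neg_neg]
  simp [inner_add_right, this]

theorem orthogonal_ker_add_id_le_comap (f : E →ₗᵢ[𝕜] E) :
    (ker (f.toLinearMap + LinearMap.id))ᗮ
      ≤ (ker (f.toLinearMap + LinearMap.id))ᗮ.comap f.toLinearMap := by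
  intro x hx
  simpa using sub_mem (f.range_add_id_le_orthogonal_ker (mem_range_self _ x)) hx

variable {W : Type*} [NormedAddCommGroup W] [InnerProductSpace ℝ W] [FiniteDimensional ℝ W]

theorem det_eq_one_of_ker_add_id_eq_bot (f : W →ₗᵢ[ℝ] W)
    (hf : ker (f.toLinearMap + LinearMap.id) = ⊥) : LinearMap.det f.toLinearMap = 1 := by
  have hadj : adjoint f.toLinearMap ∘ₗ (f.toLinearMap + LinearMap.id)
      = adjoint (f.toLinearMap + LinearMap.id) := by
    rw [comp_add, f.adjoint_comp_self', LinearMap.comp_id, map_add, adjoint_id, add_comm]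
  have hdet : LinearMap.det (f.toLinearMap + LinearMap.id) ≠ 0 := by
    rwa [Ne, det_eq_zero_iff_ker_ne_bot, not_not]
  apply_fun LinearMap.det at hadj
  rw [det_comp, det_adjoint, det_adjoint, star_trivial, star_trivial] at hadj
  exact mul_right_cancel₀ hdet (hadj.trans (one_mul _).symm)

theorem det_eq_neg_one_pow_finrank_ker_add_id (f : W →ₗᵢ[ℝ] W) :
    LinearMap.det f.toLinearMap = (-1) ^ finrank ℝ (ker (f.toLinearMap + LinearMap.id)) := by
  set K := ker (f.toLinearMap + LinearMap.id)
  have hK := f.orthogonal_ker_add_id_le_comap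
  have hrestrict : LinearMap.det (f.restrict hK).toLinearMap = 1 := by
    refine det_eq_one_of_ker_add_id_eq_bot _ (eq_bot_iff.2 fun x hx => ?_)
    have hxK : (x : W) ∈ K := by
      rw [mem_ker_add_id_iff]
      exact congr_arg Subtype.val ((mem_ker_add_id_iff _ x).1 hx)
    simpa using (Submodule.inf_orthogonal_eq_bot K).le ⟨hxK, x.2⟩
  have hquot : Kᗮ.mapQ Kᗮ f.toLinearMap hK = -LinearMap.id := by
    ext x
    change Submodule.Quotient.mk (f x) = -Submodule.Quotient.mk x
    rw [← Submodule.Quotient.mk_neg, Submodule.Quotient.eq, sub_neg_eq_add]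
    exact f.range_add_id_le_orthogonal_ker (mem_range_self _ x)
  have hfinrank : finrank ℝ (W ⧸ Kᗮ) = finrank ℝ K :=
    (Kᗮ.quotientEquivOfIsCompl K K.isCompl_orthogonal.symm).finrank_eq
  rw [det_eq_det_mul_det Kᗮ _ hK,
    show LinearMap.det (f.toLinearMap.restrict hK) = 1 from hrestrict, hquot,
    ← neg_one_smul ℝ LinearMap.id, det_smul, det_id, one_mul, mul_one, hfinrank]

end LinearIsometry

open LinearMap in
theorem lagrangianOf_inf_prod_bot {V : Type*} [NormedAddCommGroup V] [InnerProductSpace ℝ V]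
    (A : V ≃ₗᵢ[ℝ] V) :
    lagrangianOf A ⊓ (⊤ : Submodule ℝ V).prod ⊥
      = (ker (A.toLinearEquiv.toLinearMap + LinearMap.id)).prod ⊥ := by
  have hsymm : ∀ v, A.symm v = -v ↔ A v = -v := fun v => by
    rw [A.symm_apply_eq, map_neg, eq_comm, neg_eq_iff_eq_neg]
  ext ⟨x, y⟩
  simp only [lagrangianOf, Submodule.mem_inf, Submodule.mem_prod, Submodule.mem_top,
    Submodule.mem_bot, true_and, mem_range, prod_apply, Function.prod, Prod.mk.injEq,
    LinearMap.sub_apply, LinearMap.smul_apply, LinearMap.add_apply, id_apply, LinearEquiv.coe_coe,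
    LinearIsometryEquiv.coe_toLinearEquiv]
  refine and_congr_left fun hy => ?_
  subst hy
  rw [mem_ker_add_id_iff]
  change _ ↔ A x = -x
  constructor
  · rintro ⟨v, rfl, hsum⟩
    have hv : A.symm v = -v := by
      rw [smul_eq_zero_iff_right (by norm_num), add_eq_zero_iff_neg_eq] at hsum
      exact hsum.symm
    rw [hv, map_sub, map_neg, (hsymm v).1 hv]
    abel
  · intro hx
    have hx : A.symm x = -x := (hsymm x).2 hx
    refine ⟨(2⁻¹ : ℝ) • x, ?_, ?_⟩ <;> rw [map_smul, hx] <;> module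

/-- `dim(E_A ∩ V) = dim ker(A + I)`, and this is even iff `det A = 1`.
Here `V ⊂ V ⊕ V* ≅ V ⊕ V` is embedded as `V ⊕ 0 = ⊤.prod ⊥`. -/
theorem lagrangian_parity_det
    {V : Type*} [NormedAddCommGroup V] [InnerProductSpace ℝ V] [FiniteDimensional ℝ V]
    (A : V ≃ₗᵢ[ℝ] V) :
    Module.finrank ℝ ↥(lagrangianOf A ⊓ (⊤ : Submodule ℝ V).prod (⊥ : Submodule ℝ V))
        = Module.finrank ℝ ↥(LinearMap.ker (A.toLinearEquiv.toLinearMap + LinearMap.id)) ∧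
    (Even (Module.finrank ℝ
          ↥(lagrangianOf A ⊓ (⊤ : Submodule ℝ V).prod (⊥ : Submodule ℝ V)))
        ↔ LinearMap.det A.toLinearEquiv.toLinearMap = 1) := by
  have hrank : Module.finrank ℝ ↥(lagrangianOf A ⊓ (⊤ : Submodule ℝ V).prod ⊥)
      = Module.finrank ℝ ↥(LinearMap.ker (A.toLinearEquiv.toLinearMap + LinearMap.id)) := by
    rw [lagrangianOf_inf_prod_bot, Submodule.finrank_prod_bot]
  have hdet : LinearMap.det A.toLinearEquiv.toLinearMap
      = (-1) ^ Module.finrank ℝ ↥(LinearMap.ker (A.toLinearEquiv.toLinearMap + LinearMap.id)) :=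
    A.toLinearIsometry.det_eq_neg_one_pow_finrank_ker_add_id
  refine ⟨hrank, ?_⟩
  rw [hrank, hdet, neg_one_pow_eq_one_iff_even (by norm_num)]
end

section
/- Strong Dirac morphisms preserve parity: if (Θ,ω): (𝕍,E) ⇢ (𝕍',E') is a strong Dirac morphism of linear Dirac structures, then dim(E ∩ V) ≡ dim(E' ∩ V') mod 2. -/
/-!
For a Lagrangian `E` and an alternating `σ : V → V*`, the form `(x, y) ↦ (α_x - σ v_x)(v_y)` is
alternating on `E`, and it is `⟪(0, α_x - σ v_x), y⟫`; as `E` is Lagrangian, its kernel is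
`{x ∈ E | (0, α_x - σ v_x) ∈ E} = (E ∩ graph σ) ⊕ (E ∩ V*)`. An alternating form has even rank,
so `dim (E ∩ graph σ) + dim (E ∩ V*) ≡ dim E (mod 2)`, and comparing `σ = ω` with `σ = 0` gives
`dim (E ∩ graph ω) ≡ dim (E ∩ V)`. Finally `(v, α) ↦ (Θ v, 0)` maps `E ∩ graph ω` onto `E' ∩ V'`,
injectively because the morphism is strong.
-/

open Module

theorem Matrix.det_eq_zero_of_transpose_eq_neg {n R : Type*} [Fintype n] [DecidableEq n]
    [CommRing R] [IsDomain R] [NeZero (2 : R)] {M : Matrix n n R} (hM : M.transpose = -M)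
    (hn : Odd (Fintype.card n)) : M.det = 0 := by
  have hdet : M.det = -M.det :=
    calc M.det = M.transpose.det := M.det_transpose.symm
      _ = (-1) ^ Fintype.card n * M.det := by rw [hM, Matrix.det_neg]
      _ = -M.det := by rw [hn.neg_one_pow, neg_one_mul]
  rw [eq_neg_iff_add_eq_zero, ← two_mul] at hdet
  exact (mul_eq_zero.mp hdet).resolve_left two_ne_zero

theorem LinearMap.graph_zero {R M N : Type*} [Semiring R] [AddCommMonoid M] [AddCommMonoid N]
    [Module R M] [Module R N] : (0 : M →ₗ[R] N).graph = (⊤ : Submodule R M).prod ⊥ := by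
  ext x
  simp [LinearMap.mem_graph_iff, Submodule.mem_prod]

namespace LinearMap.BilinForm

variable {K V : Type*} [Field K] [NeZero (2 : K)] [AddCommGroup V] [Module K V]
  [FiniteDimensional K V] {B : LinearMap.BilinForm K V}

theorem IsAlt.even_finrank_of_nondegenerate (hB : B.IsAlt) (hnd : B.Nondegenerate) :
    Even (finrank K V) := by
  by_contra hodd
  let b := Module.finBasis K V
  have hskew : (toMatrix b B).transpose = -toMatrix b B := by
    ext i j
    rw [Matrix.transpose_apply, Matrix.neg_apply, toMatrix_apply, toMatrix_apply, hB.neg_eq]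
  refine (nondegenerate_iff_det_ne_zero b).mp hnd (Matrix.det_eq_zero_of_transpose_eq_neg hskew ?_)
  rwa [Fintype.card_fin, ← Nat.not_even_iff_odd]

theorem IsAlt.finrank_ker_mod_two (hB : B.IsAlt) :
    finrank K (LinearMap.ker B) % 2 = finrank K V % 2 := by
  obtain ⟨C, hC⟩ := (LinearMap.ker B).exists_isCompl
  have hker : LinearMap.ker (B.restrict C) = ⊥ := by
    rw [ker_restrict_eq_of_codisjoint hC.symm.codisjoint fun x _ y hy => ?_,
      ← Submodule.disjoint_iff_comap_eq_bot]
    · exact hC.symm.disjoint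
    · rw [← hB.neg_eq, LinearMap.mem_ker.mp hy, LinearMap.zero_apply, neg_zero]
  have hC_even : Even (finrank K C) :=
    IsAlt.even_finrank_of_nondegenerate (fun x => hB x) (nondegenerate_iff_ker_eq_bot.mpr hker)
  have hdim := Submodule.finrank_add_eq_of_isCompl hC
  obtain ⟨k, hk⟩ := hC_even
  omega

end LinearMap.BilinForm

section Lagrangian

variable {V : Type*} [AddCommGroup V] [Module ℝ V]

def twistedPairing (σ : V →ₗ[ℝ] Module.Dual ℝ V) : LinearMap.BilinForm ℝ (V × Module.Dual ℝ V) :=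
  (LinearMap.snd ℝ V _ - σ ∘ₗ LinearMap.fst ℝ V _).compl₂ (LinearMap.fst ℝ V _)

@[simp]
theorem twistedPairing_apply (σ : V →ₗ[ℝ] Module.Dual ℝ V) (x y : V × Module.Dual ℝ V) :
    twistedPairing σ x y = x.2 y.1 - σ x.1 y.1 :=
  rfl

variable {E : Submodule ℝ (V × Module.Dual ℝ V)} {σ : V →ₗ[ℝ] Module.Dual ℝ V}

theorem mem_inf_graph_sup_inf_vertical_iff {x : V × Module.Dual ℝ V} :
    x ∈ E ⊓ σ.graph ⊔ E ⊓ (⊥ : Submodule ℝ V).prod ⊤ ↔ x ∈ E ∧ ((0 : V), x.2 - σ x.1) ∈ E := by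
  simp only [Submodule.mem_sup, Submodule.mem_inf, LinearMap.mem_graph_iff, Submodule.mem_prod,
    Submodule.mem_bot, Submodule.mem_top, and_true]
  constructor
  · rintro ⟨g, ⟨hgE, hg⟩, w, ⟨hwE, hw⟩, rfl⟩
    refine ⟨E.add_mem hgE hwE, ?_⟩
    convert hwE using 1
    ext <;> simp [hg, hw]
  · rintro ⟨hx, hv⟩
    refine ⟨(x.1, σ x.1), ⟨?_, rfl⟩, _, ⟨hv, rfl⟩, by ext <;> simp⟩
    convert E.sub_mem hx hv using 1
    ext <;> simp

theorem disjoint_graph_vertical :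
    Disjoint σ.graph ((⊥ : Submodule ℝ V).prod (⊤ : Submodule ℝ (Module.Dual ℝ V))) := by
  rw [Submodule.disjoint_def]
  rintro ⟨v, α⟩ hg hv
  simp_all [LinearMap.mem_graph_iff, Submodule.mem_prod]

theorem IsLagrangian.isAlt_restrict_twistedPairing (hE : IsLagrangian E) (hσ : ∀ v, σ v v = 0) :
    LinearMap.BilinForm.IsAlt ((twistedPairing σ).restrict E) := by
  intro x
  have hx : x.1.2 x.1.1 + x.1.2 x.1.1 = 0 := (hE x).mpr x.2 x x.2
  simp only [LinearMap.BilinForm.restrict_apply, LinearMap.domRestrict_apply, twistedPairing_apply,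
    hσ]
  linarith

theorem IsLagrangian.mem_ker_restrict_twistedPairing_iff (hE : IsLagrangian E) (x : E) :
    x ∈ LinearMap.ker ((twistedPairing σ).restrict E) ↔ ((0 : V), x.1.2 - σ x.1.1) ∈ E := by
  rw [← hE, LinearMap.mem_ker, LinearMap.ext_iff, Subtype.forall]
  simp [diracPair]

theorem IsLagrangian.map_ker_restrict_twistedPairing (hE : IsLagrangian E) :
    (LinearMap.ker ((twistedPairing σ).restrict E)).map E.subtype =
      E ⊓ σ.graph ⊔ E ⊓ (⊥ : Submodule ℝ V).prod ⊤ := by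
  ext x
  rw [mem_inf_graph_sup_inf_vertical_iff, Submodule.mem_map]
  constructor
  · rintro ⟨y, hy, rfl⟩
    exact ⟨y.2, (hE.mem_ker_restrict_twistedPairing_iff y).mp hy⟩
  · rintro ⟨hx, hv⟩
    exact ⟨⟨x, hx⟩, (hE.mem_ker_restrict_twistedPairing_iff _).mpr hv, rfl⟩

variable [FiniteDimensional ℝ V]

theorem IsLagrangian.finrank_ker_restrict_twistedPairing (hE : IsLagrangian E) :
    finrank ℝ (LinearMap.ker ((twistedPairing σ).restrict E)) =
      finrank ℝ ↥(E ⊓ σ.graph) + finrank ℝ ↥(E ⊓ (⊥ : Submodule ℝ V).prod ⊤) := by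
  rw [← Submodule.finrank_map_subtype_eq, hE.map_ker_restrict_twistedPairing,
    ← Submodule.finrank_sup_add_finrank_inf_eq,
    (disjoint_graph_vertical.mono inf_le_right inf_le_right).eq_bot, finrank_bot, add_zero]

theorem IsLagrangian.finrank_inf_graph_mod_two (hE : IsLagrangian E) (hσ : ∀ v, σ v v = 0) :
    finrank ℝ ↥(E ⊓ σ.graph) % 2 =
      finrank ℝ ↥(E ⊓ (⊤ : Submodule ℝ V).prod (⊥ : Submodule ℝ (Module.Dual ℝ V))) % 2 := by
  have hσ_parity :=
    LinearMap.BilinForm.IsAlt.finrank_ker_mod_two (V := E) (hE.isAlt_restrict_twistedPairing hσ)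
  have h0_parity := LinearMap.BilinForm.IsAlt.finrank_ker_mod_two (V := E)
    (hE.isAlt_restrict_twistedPairing (σ := 0) fun _ => rfl)
  rw [hE.finrank_ker_restrict_twistedPairing] at hσ_parity h0_parity
  rw [LinearMap.graph_zero] at h0_parity
  omega

end Lagrangian

section Morphism

variable {V V' : Type*} [AddCommGroup V] [Module ℝ V] [AddCommGroup V'] [Module ℝ V']
  {Θ : V →ₗ[ℝ] V'} {ω : V →ₗ[ℝ] Module.Dual ℝ V}
  {E : Submodule ℝ (V × Module.Dual ℝ V)} {E' : Submodule ℝ (V' × Module.Dual ℝ V')}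

theorem IsDiracMorphism.map_inf_graph (h : IsDiracMorphism Θ ω E E') :
    (E ⊓ ω.graph).map (Θ.prodMap (0 : Module.Dual ℝ V →ₗ[ℝ] Module.Dual ℝ V')) =
      E' ⊓ (⊤ : Submodule ℝ V').prod ⊥ := by
  ext ⟨v', α'⟩
  have hE' : (v', α') ∈ E' ↔ ∃ x ∈ E, v' = Θ x.1 ∧ x.2 = ω x.1 + α'.comp Θ := by
    rw [← SetLike.mem_coe, h]
    rfl
  simp only [Submodule.mem_map, Submodule.mem_inf, hE', LinearMap.mem_graph_iff,
    Submodule.mem_prod, Submodule.mem_top, Submodule.mem_bot, true_and, LinearMap.prodMap_apply,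
    LinearMap.zero_apply, Prod.mk.injEq]
  constructor
  · rintro ⟨x, ⟨hxE, hx⟩, rfl, rfl⟩
    exact ⟨⟨x, hxE, rfl, by simp [hx]⟩, rfl⟩
  · rintro ⟨⟨x, hxE, rfl, hx⟩, rfl⟩
    exact ⟨x, ⟨hxE, by simpa using hx⟩, rfl, rfl⟩

theorem IsStrongDiracMorphism.disjoint_inf_graph_ker (h : IsStrongDiracMorphism Θ ω E E') :
    Disjoint (E ⊓ ω.graph)
      (LinearMap.ker (Θ.prodMap (0 : Module.Dual ℝ V →ₗ[ℝ] Module.Dual ℝ V'))) := by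
  rw [Submodule.disjoint_def]
  intro x hx hΘ
  rw [Submodule.mem_inf, LinearMap.mem_graph_iff] at hx
  have hΘ : Θ x.1 = 0 := congrArg Prod.fst hΘ
  exact h.2 x hx.1 ⟨hΘ.symm, by simp [hx.2]⟩

theorem IsStrongDiracMorphism.finrank_inf_horizontal (h : IsStrongDiracMorphism Θ ω E E') :
    finrank ℝ ↥(E' ⊓ (⊤ : Submodule ℝ V').prod ⊥) = finrank ℝ ↥(E ⊓ ω.graph) := by
  rw [← h.1.map_inf_graph, ← LinearMap.range_domRestrict, LinearMap.finrank_range_of_inj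
    (LinearMap.injective_domRestrict_iff.mpr h.disjoint_inf_graph_ker)]

end Morphism

theorem strong_Dirac_morphism_preserves_parity_general
    {V V' : Type*} [AddCommGroup V] [Module ℝ V] [FiniteDimensional ℝ V]
    [AddCommGroup V'] [Module ℝ V']
    (Θ : V →ₗ[ℝ] V') (ω : V →ₗ[ℝ] Module.Dual ℝ V) (hω : ∀ v, ω v v = 0)
    (E : Submodule ℝ (V × Module.Dual ℝ V)) (hE : IsLagrangian E)
    (E' : Submodule ℝ (V' × Module.Dual ℝ V'))
    (h : IsStrongDiracMorphism Θ ω E E') :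
    Module.finrank ℝ ↥(E ⊓ (⊤ : Submodule ℝ V).prod (⊥ : Submodule ℝ (Module.Dual ℝ V))) % 2
      = Module.finrank ℝ
          ↥(E' ⊓ (⊤ : Submodule ℝ V').prod (⊥ : Submodule ℝ (Module.Dual ℝ V'))) % 2 := by
  rw [h.finrank_inf_horizontal, hE.finrank_inf_graph_mod_two hω]

/-- Strong Dirac morphisms preserve the parity
`dim(E ∩ V) mod 2` of Lagrangian subspaces. Here `V ⊂ V ⊕ V*` is embedded
as `V ⊕ 0 = ⊤.prod ⊥`. -/
theorem strong_Dirac_morphism_preserves_parity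
    {V V' : Type*} [AddCommGroup V] [Module ℝ V] [FiniteDimensional ℝ V]
    [AddCommGroup V'] [Module ℝ V'] [FiniteDimensional ℝ V']
    (Θ : V →ₗ[ℝ] V') (ω : V →ₗ[ℝ] Module.Dual ℝ V) (hω : ∀ v, ω v v = 0)
    (E : Submodule ℝ (V × Module.Dual ℝ V)) (hE : IsLagrangian E)
    (E' : Submodule ℝ (V' × Module.Dual ℝ V')) (hE' : IsLagrangian E')
    (h : IsStrongDiracMorphism Θ ω E E') :
    Module.finrank ℝ ↥(E ⊓ (⊤ : Submodule ℝ V).prod (⊥ : Submodule ℝ (Module.Dual ℝ V))) % 2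
      = Module.finrank ℝ
          ↥(E' ⊓ (⊤ : Submodule ℝ V').prod (⊥ : Submodule ℝ (Module.Dual ℝ V'))) % 2 :=
  strong_Dirac_morphism_preserves_parity_general Θ ω hω E hE E' h
end

section
/- Let X be a Euclidean vector space, A₁, A₂ ∈ O(X), A = A₁A₂, and let e_A(ξ) = ((I−A⁻¹)ξ, (I+A⁻¹)ξ/2) denote the parametrization of the Lagrangian subspace E_A. Let Σ((A₁,ξ₁),(A₂,ξ₂)) = (A₁A₂, A₂⁻¹ξ₁+ξ₂) be the semidirect-product multiplication, and σ the 2-form on X⊕X given at (A₁,A₂) by σ((ξ₁,ξ₂),(ζ₁,ζ₂)) = ½(B(ξ₁, A₂ζ₂) − B(A₂ξ₂, ζ₁)). Then e_{A₁}(ξ₁) × e_{A₂}(ξ₂) is related to e_A(ξ) under the morphism (Σ,σ) if and only if ξ₁ = ξ₂ = ξ. In particular (Σ,σ) defines a strong Dirac morphism from the product of the tautological Dirac structures at (A₁,A₂) to the tautological Dirac structure at A₁A₂. -/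
open RealInnerProductSpace

/-- The parametrization `e_A(ξ) = ((I - A⁻¹)ξ, (I + A⁻¹)ξ/2)` of `E_A`. -/
noncomputable def eltOf {X : Type*} [NormedAddCommGroup X] [InnerProductSpace ℝ X]
    (A : X ≃ₗᵢ[ℝ] X) (ξ : X) : X × X :=
  (ξ - A.symm ξ, (2⁻¹ : ℝ) • (ξ + A.symm ξ))

/-- The element `e_{A₁}(ξ₁) × e_{A₂}(ξ₂)` of the product `𝕏 × 𝕏`, rearranged as an
element of `(X ⊕ X) ⊕ (X ⊕ X)* `. -/
noncomputable def prodElt {X : Type*} [NormedAddCommGroup X] [InnerProductSpace ℝ X]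
    (A₁ A₂ : X ≃ₗᵢ[ℝ] X) (ξ₁ ξ₂ : X) : (X × X) × (X × X) :=
  (((eltOf A₁ ξ₁).1, (eltOf A₂ ξ₂).1), ((eltOf A₁ ξ₁).2, (eltOf A₂ ξ₂).2))

/-- The semidirect product multiplication map at `(A₁, A₂)`: `(ξ₁, ξ₂) ↦ A₂⁻¹ξ₁ + ξ₂`. -/
noncomputable def multMap {X : Type*} [NormedAddCommGroup X] [InnerProductSpace ℝ X]
    (A₂ : X ≃ₗᵢ[ℝ] X) (v : X × X) : X :=
  A₂.symm v.1 + v.2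

/-- The 2-form `σ` at `(A₁, A₂)`:
`σ((ξ₁,ξ₂),(ζ₁,ζ₂)) = ½(B(ξ₁, A₂ζ₂) − B(A₂ξ₂, ζ₁))`. -/
noncomputable def sigmaForm {X : Type*} [NormedAddCommGroup X] [InnerProductSpace ℝ X]
    (A₂ : X ≃ₗᵢ[ℝ] X) (v w : X × X) : ℝ :=
  (2⁻¹ : ℝ) * (⟪v.1, A₂ w.2⟫ - ⟪A₂ v.2, w.1⟫)

/-- The relation defined by the morphism `(Σ, σ)` at `(A₁, A₂)`:
`(v, α) ∼ (v', α')` iff `v' = Σ(v)` and `α = ι_v σ + Σ*α'`, where the dual spaces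
are identified with the underlying spaces via the inner product. -/
noncomputable def multRel {X : Type*} [NormedAddCommGroup X] [InnerProductSpace ℝ X]
    (A₂ : X ≃ₗᵢ[ℝ] X) (x : (X × X) × (X × X)) (y : X × X) : Prop :=
  y.1 = multMap A₂ x.1 ∧
    ∀ u : X × X, ⟪x.2.1, u.1⟫ + ⟪x.2.2, u.2⟫ = sigmaForm A₂ x.1 u + ⟪y.2, multMap A₂ u⟫

/-! Identifying `(X ⊕ X)*` with `X ⊕ X`, the cotangent condition `α = ι_vσ + Σ*α'` says
`α = (A₂α' - ½A₂v₂, α' + ½A₂⁻¹v₁)`. For `(v, α) = e_{A₁}(ξ₁) × e_{A₂}(ξ₂)`, applying `A₂⁻¹` to the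
first component and subtracting the second eliminates `α'` and leaves `A₂⁻¹ξ₁ = A₂⁻¹ξ₂`; the
remaining equations then say exactly that `(v', α') = e_{A₁A₂}(ξ₁)`. Since `e_A` is injective
with image `E_A`, all three claims follow. -/

section

variable {X : Type*} [NormedAddCommGroup X] [InnerProductSpace ℝ X]

theorem forall_inner_add_inner_eq_iff (a b c d : X) :
    (∀ u : X × X, ⟪a, u.1⟫ + ⟪b, u.2⟫ = ⟪c, u.1⟫ + ⟪d, u.2⟫) ↔ a = c ∧ b = d := by
  refine ⟨fun h => ⟨?_, ?_⟩, fun ⟨hac, hbd⟩ _ => hac ▸ hbd ▸ rfl⟩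
  · exact ext_inner_right ℝ fun w => by simpa using h (w, 0)
  · exact ext_inner_right ℝ fun w => by simpa using h (0, w)

theorem sigmaForm_eq_inner (A₂ : X ≃ₗᵢ[ℝ] X) (v u : X × X) :
    sigmaForm A₂ v u = ⟪-(2⁻¹ : ℝ) • A₂ v.2, u.1⟫ + ⟪(2⁻¹ : ℝ) • A₂.symm v.1, u.2⟫ := by
  have hadj : ⟪v.1, A₂ u.2⟫ = ⟪A₂.symm v.1, u.2⟫ := by
    rw [A₂.symm.inner_map_eq_flip, A₂.symm_symm]
  rw [sigmaForm, hadj, neg_smul, inner_neg_left, real_inner_smul_left, real_inner_smul_left]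
  ring

theorem inner_multMap (A₂ : X ≃ₗᵢ[ℝ] X) (α : X) (u : X × X) :
    ⟪α, multMap A₂ u⟫ = ⟪A₂ α, u.1⟫ + ⟪α, u.2⟫ := by
  rw [multMap, inner_add_right, A₂.inner_map_eq_flip]

theorem multRel_iff (A₂ : X ≃ₗᵢ[ℝ] X) (x : (X × X) × (X × X)) (y : X × X) :
    multRel A₂ x y ↔ y.1 = multMap A₂ x.1 ∧
      x.2.1 = A₂ y.2 - (2⁻¹ : ℝ) • A₂ x.1.2 ∧ x.2.2 = y.2 + (2⁻¹ : ℝ) • A₂.symm x.1.1 := by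
  have hform (u : X × X) : sigmaForm A₂ x.1 u + ⟪y.2, multMap A₂ u⟫ =
      ⟪A₂ y.2 - (2⁻¹ : ℝ) • A₂ x.1.2, u.1⟫ + ⟪y.2 + (2⁻¹ : ℝ) • A₂.symm x.1.1, u.2⟫ := by
    rw [sigmaForm_eq_inner, inner_multMap, sub_eq_add_neg, ← neg_smul, inner_add_left,
      inner_add_left]
    ring
  simp only [multRel, hform, forall_inner_add_inner_eq_iff]

theorem multRel_prodElt_iff (A₁ A₂ : X ≃ₗᵢ[ℝ] X) (ξ₁ ξ₂ : X) (y : X × X) :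
    multRel A₂ (prodElt A₁ A₂ ξ₁ ξ₂) y ↔ ξ₁ = ξ₂ ∧ y = eltOf (A₂.trans A₁) ξ₁ := by
  simp only [multRel_iff, prodElt, eltOf, multMap, Prod.ext_iff, LinearIsometryEquiv.symm_trans,
    LinearIsometryEquiv.trans_apply]
  constructor
  · rintro ⟨h1, h2, h3⟩
    have h2' := congrArg A₂.symm h2
    simp only [map_smul, map_add, map_sub, A₂.symm_apply_apply] at h1 h2' h3
    have hξ : ξ₁ = ξ₂ := A₂.symm.injective <| by
      linear_combination (norm := module) h2' - h3
    subst hξ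
    exact ⟨rfl, by rw [h1]; module, by linear_combination (norm := module) -h3⟩
  · rintro ⟨rfl, h1, h2⟩
    simp only [h1, h2, map_smul, map_add, map_sub, A₂.apply_symm_apply]
    refine ⟨by module, by module, by module⟩

theorem eltOf_injective (A : X ≃ₗᵢ[ℝ] X) : Function.Injective (eltOf A) := by
  intro a b h
  obtain ⟨h1, h2⟩ := Prod.ext_iff.mp h
  simp only [eltOf] at h1 h2
  linear_combination (norm := module) (2⁻¹ : ℝ) • h1 + h2

theorem eltOf_zero (A : X ≃ₗᵢ[ℝ] X) : eltOf A 0 = 0 := by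
  simp [eltOf]

theorem mem_lagrangianOf_iff_s8 (A : X ≃ₗᵢ[ℝ] X) (y : X × X) :
    y ∈ lagrangianOf A ↔ ∃ ξ, eltOf A ξ = y :=
  Iff.rfl

end

theorem tautological_Dirac_structure_multiplicative_general
    {X : Type*} [NormedAddCommGroup X] [InnerProductSpace ℝ X]
    (A₁ A₂ : X ≃ₗᵢ[ℝ] X) :
    (∀ ξ ξ₁ ξ₂ : X,
        multRel A₂ (prodElt A₁ A₂ ξ₁ ξ₂) (eltOf (A₂.trans A₁) ξ) ↔ (ξ₁ = ξ ∧ ξ₂ = ξ)) ∧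
    (∀ y : X × X,
        (∃ ξ₁ ξ₂ : X, multRel A₂ (prodElt A₁ A₂ ξ₁ ξ₂) y)
          ↔ y ∈ lagrangianOf (A₂.trans A₁)) ∧
    (∀ ξ₁ ξ₂ : X, multRel A₂ (prodElt A₁ A₂ ξ₁ ξ₂) 0 → ξ₁ = 0 ∧ ξ₂ = 0) := by
  have hinj := eltOf_injective (A₂.trans A₁)
  refine ⟨fun ξ ξ₁ ξ₂ => ?_, fun y => ?_, fun ξ₁ ξ₂ h => ?_⟩
  · rw [multRel_prodElt_iff, hinj.eq_iff]
    constructor <;> rintro ⟨rfl, rfl⟩ <;> exact ⟨rfl, rfl⟩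
  · simp only [multRel_prodElt_iff, mem_lagrangianOf_iff_s8]
    exact ⟨fun ⟨ξ, _, _, hy⟩ => ⟨ξ, hy.symm⟩, fun ⟨ξ, hy⟩ => ⟨ξ, ξ, rfl, hy.symm⟩⟩
  · obtain ⟨rfl, h0⟩ := (multRel_prodElt_iff A₁ A₂ ξ₁ ξ₂ 0).mp h
    have : ξ₁ = 0 := hinj (h0.symm.trans (eltOf_zero _).symm)
    exact ⟨this, this⟩

/-- multiplicativity of the tautological Dirac structure over `O(X)`.
With `A = A₁A₂`, one has `e_{A₁}(ξ₁) × e_{A₂}(ξ₂) ∼_{(Σ,σ)} e_A(ξ)` iff `ξ₁ = ξ₂ = ξ`;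
in particular `(Σ,σ)` is a strong Dirac morphism from the product of the tautological
Dirac structures at `(A₁,A₂)` onto the tautological Dirac structure at `A₁A₂`. -/
theorem tautological_Dirac_structure_multiplicative
    {X : Type*} [NormedAddCommGroup X] [InnerProductSpace ℝ X] [FiniteDimensional ℝ X]
    (A₁ A₂ : X ≃ₗᵢ[ℝ] X) :
    (∀ ξ ξ₁ ξ₂ : X,
        multRel A₂ (prodElt A₁ A₂ ξ₁ ξ₂) (eltOf (A₂.trans A₁) ξ) ↔ (ξ₁ = ξ ∧ ξ₂ = ξ)) ∧
    (∀ y : X × X,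
        (∃ ξ₁ ξ₂ : X, multRel A₂ (prodElt A₁ A₂ ξ₁ ξ₂) y)
          ↔ y ∈ lagrangianOf (A₂.trans A₁)) ∧
    (∀ ξ₁ ξ₂ : X, multRel A₂ (prodElt A₁ A₂ ξ₁ ξ₂) 0 → ξ₁ = 0 ∧ ξ₂ = 0) :=
  tautological_Dirac_structure_multiplicative_general A₁ A₂
end
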